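/- arXiv:2406.04868 — 3 statements merged into one kernel-verified Lean document; each statement's English description precedes it below -/
import Mathlib

section
/- (Stability of projections) Let S ⊆ ℝⁿ be a nonempty compact convex set and let Π_S denote the Euclidean projection onto S. Then for every A ∈ ℝⁿ, E_{W∼N(0,Id_n)} ‖Π_S(A+W) − Π_S(A)‖² ≤ (4/3)·G(S). -/
open MeasureTheory ProbabilityTheory

/-- The standard Gaussian measure `N(0, Id_n)` on `ℝⁿ = EuclideanSpace ℝ (Fin n)`. -/
noncomputable def stdGaussianE (n : ℕ) : Measure (EuclideanSpace ℝ (Fin n)) :=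
  (Measure.pi fun _ : Fin n => gaussianReal 0 1).map
    (MeasurableEquiv.toLp 2 (Fin n → ℝ))

/-- Gaussian complexity `G(S) = E_{W ∼ N(0,Id_n)} sup_{X ∈ S} ⟨X, W⟩`. -/
noncomputable def gaussComplexity {n : ℕ} (S : Set (EuclideanSpace ℝ (Fin n))) : ℝ :=
  ∫ w, (⨆ X ∈ S, (inner ℝ X w : ℝ)) ∂(stdGaussianE n)

/-! Firm nonexpansiveness of the projection gives, pointwise in the noise `w`,
`‖Π(A + w) - Π A‖² ≤ ⟪w, Π(A + w) - Π A⟫ ≤ sup_{X ∈ S} ⟪X, w⟫ - ⟪Π A, w⟫`.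
The last term has mean zero for any centred noise, so the expectation of the left side is at most
`G(S)`; and `G(S) ≥ 0` because `S` is nonempty, which leaves room for the factor `4/3`. -/

open scoped RealInnerProductSpace

section Projection

variable {E : Type*} [NormedAddCommGroup E] [InnerProductSpace ℝ E] {S : Set E} {proj : E → E}

theorem inner_sub_proj_le_zero (hconv : Convex ℝ S)
    (hproj : ∀ x, proj x ∈ S ∧ ∀ y ∈ S, ‖x - proj x‖ ≤ ‖x - y‖) (x : E) {y : E} (hy : y ∈ S) :
    ⟪x - proj x, y - proj x⟫ ≤ 0 := by
  have : Nonempty S := ⟨⟨proj x, (hproj x).1⟩⟩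
  have hbdd : BddBelow (Set.range fun z : S => ‖x - z‖) := ⟨0, by
    rintro _ ⟨z, rfl⟩
    exact norm_nonneg _⟩
  have hinf : ‖x - proj x‖ = ⨅ z : S, ‖x - z‖ :=
    (le_ciInf fun z : S => (hproj x).2 z z.2).antisymm (ciInf_le hbdd ⟨proj x, (hproj x).1⟩)
  exact (norm_eq_iInf_iff_real_inner_le_zero hconv (hproj x).1).mp hinf y hy

theorem norm_proj_sub_proj_sq_le_inner (hconv : Convex ℝ S)
    (hproj : ∀ x, proj x ∈ S ∧ ∀ y ∈ S, ‖x - proj x‖ ≤ ‖x - y‖) (x y : E) :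
    ‖proj y - proj x‖ ^ 2 ≤ ⟪y - x, proj y - proj x⟫ := by
  have hx := inner_sub_proj_le_zero hconv hproj x (hproj y).1
  have hy := inner_sub_proj_le_zero hconv hproj y (hproj x).1
  have hsplit : ⟪y - x, proj y - proj x⟫ - ‖proj y - proj x‖ ^ 2
      = -⟪y - proj y, proj x - proj y⟫ - ⟪x - proj x, proj y - proj x⟫ := by
    rw [← real_inner_self_eq_norm_sq]
    simp only [inner_sub_left, inner_sub_right, real_inner_comm]
    ring
  linarith

end Projection

section SupInner

variable {E : Type*} [NormedAddCommGroup E] [InnerProductSpace ℝ E] {S : Set E} {R : ℝ}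

theorem bddAbove_iUnion_range_inner (hR : ∀ X ∈ S, ‖X‖ ≤ R) (w : E) :
    BddAbove (⋃ X, Set.range fun _ : X ∈ S => ⟪X, w⟫) := by
  refine ⟨R * ‖w‖, ?_⟩
  rintro _ ⟨_, ⟨X, rfl⟩, hX, rfl⟩
  exact (real_inner_le_norm X w).trans (mul_le_mul_of_nonneg_right (hR X hX) (norm_nonneg w))

theorem inner_le_biSup_inner (hR : ∀ X ∈ S, ‖X‖ ≤ R) {X : E} (hX : X ∈ S) (w : E) :
    ⟪X, w⟫ ≤ ⨆ Y ∈ S, ⟪Y, w⟫ :=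
  le_ciSup₂ (f := fun Y (_ : Y ∈ S) => ⟪Y, w⟫) (bddAbove_iUnion_range_inner hR w) X hX

theorem abs_biSup_inner_le (hS : S.Nonempty) (hR : ∀ X ∈ S, ‖X‖ ≤ R) (w : E) :
    |⨆ X ∈ S, ⟪X, w⟫| ≤ R * ‖w‖ := by
  obtain ⟨X₀, hX₀⟩ := hS
  have hbound : ∀ X ∈ S, |⟪X, w⟫| ≤ R * ‖w‖ := fun X hX =>
    (abs_real_inner_le_norm X w).trans (mul_le_mul_of_nonneg_right (hR X hX) (norm_nonneg w))
  have hRw : 0 ≤ R * ‖w‖ := (abs_nonneg _).trans (hbound X₀ hX₀)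
  refine abs_le.mpr ⟨?_, ?_⟩
  · exact (neg_le_of_abs_le (hbound X₀ hX₀)).trans (inner_le_biSup_inner hR hX₀ w)
  · exact Real.iSup_le (fun X => Real.iSup_le (fun hX => (abs_le.mp (hbound X hX)).2) hRw) hRw

/-- The inner supremum `⨆ _ : X ∈ S, ⟪X, w⟫` is `⟪X, w⟫`, or the junk value `0` when `X ∉ S`;
both are continuous in `w`. -/
theorem lowerSemicontinuous_biSup_inner (hR : ∀ X ∈ S, ‖X‖ ≤ R) :
    LowerSemicontinuous fun w : E => ⨆ X ∈ S, ⟪X, w⟫ := by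
  refine lowerSemicontinuous_ciSup
    (fun w => (bddAbove_iUnion_range_inner hR w).range_iSup_of_iUnion_range) fun X => ?_
  refine lowerSemicontinuous_ciSup (fun w => (Set.finite_range _).bddAbove) fun _ => ?_
  exact (continuous_const.inner continuous_id).lowerSemicontinuous

theorem integrable_biSup_inner [MeasurableSpace E] [OpensMeasurableSpace E] {μ : Measure E}
    (hS : S.Nonempty) (hR : ∀ X ∈ S, ‖X‖ ≤ R) (hμ : Integrable id μ) :
    Integrable (fun w => ⨆ X ∈ S, ⟪X, w⟫) μ :=
  (hμ.norm.const_mul R).mono' (lowerSemicontinuous_biSup_inner hR).measurable.aestronglyMeasurable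
    (ae_of_all _ fun w => abs_biSup_inner_le hS hR w)

end SupInner

section Centered

variable {E : Type*} [NormedAddCommGroup E] [InnerProductSpace ℝ E] [CompleteSpace E]
  [MeasurableSpace E] {μ : Measure E} {S : Set E}

theorem integral_inner_eq_zero_of_integral_eq_zero (hμ : Integrable id μ)
    (hmean : ∫ w, w ∂μ = 0) (c : E) : ∫ w, ⟪c, w⟫ ∂μ = 0 := by
  simpa [hmean] using integral_inner hμ c

variable [OpensMeasurableSpace E]

theorem integral_biSup_inner_nonneg (hS : S.Nonempty) (hSbdd : Bornology.IsBounded S)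
    (hμ : Integrable id μ) (hmean : ∫ w, w ∂μ = 0) :
    0 ≤ ∫ w, ⨆ X ∈ S, ⟪X, w⟫ ∂μ := by
  obtain ⟨R, hR⟩ := isBounded_iff_forall_norm_le.mp hSbdd
  obtain ⟨X₀, hX₀⟩ := hS
  calc (0 : ℝ) = ∫ w, ⟪X₀, w⟫ ∂μ := (integral_inner_eq_zero_of_integral_eq_zero hμ hmean X₀).symm
    _ ≤ ∫ w, ⨆ X ∈ S, ⟪X, w⟫ ∂μ :=
      integral_mono (hμ.const_inner X₀) (integrable_biSup_inner ⟨X₀, hX₀⟩ hR hμ)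
        fun w => inner_le_biSup_inner hR hX₀ w

theorem integral_norm_proj_add_sub_proj_sq_le (hSbdd : Bornology.IsBounded S)
    (hconv : Convex ℝ S) {proj : E → E}
    (hproj : ∀ x, proj x ∈ S ∧ ∀ y ∈ S, ‖x - proj x‖ ≤ ‖x - y‖)
    (hμ : Integrable id μ) (hmean : ∫ w, w ∂μ = 0) (A : E) :
    ∫ w, ‖proj (A + w) - proj A‖ ^ 2 ∂μ ≤ ∫ w, ⨆ X ∈ S, ⟪X, w⟫ ∂μ := by
  obtain ⟨R, hR⟩ := isBounded_iff_forall_norm_le.mp hSbdd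
  have hσ := integrable_biSup_inner ⟨proj 0, (hproj 0).1⟩ hR hμ
  have hlin : Integrable (fun w => ⟪proj A, w⟫) μ := hμ.const_inner (proj A)
  have hpointwise (w : E) : ‖proj (A + w) - proj A‖ ^ 2 ≤ (⨆ X ∈ S, ⟪X, w⟫) - ⟪proj A, w⟫ := by
    have h := norm_proj_sub_proj_sq_le_inner hconv hproj A (A + w)
    rw [add_sub_cancel_left, inner_sub_right, real_inner_comm (proj (A + w)),
      real_inner_comm (proj A)] at h
    linarith [inner_le_biSup_inner hR (hproj (A + w)).1 w]
  calc ∫ w, ‖proj (A + w) - proj A‖ ^ 2 ∂μ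
      ≤ ∫ w, (⨆ X ∈ S, ⟪X, w⟫) - ⟪proj A, w⟫ ∂μ :=
        integral_mono_of_nonneg (ae_of_all _ fun w => by positivity) (hσ.sub hlin)
          (ae_of_all _ hpointwise)
    _ = ∫ w, ⨆ X ∈ S, ⟪X, w⟫ ∂μ := by
        rw [integral_sub hσ hlin, integral_inner_eq_zero_of_integral_eq_zero hμ hmean, sub_zero]

end Centered

theorem stdGaussianE_eq_stdGaussian (n : ℕ) :
    stdGaussianE n = stdGaussian (EuclideanSpace ℝ (Fin n)) :=
  map_pi_eq_stdGaussian

theorem stability_of_projections_general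
    (n : ℕ) (S : Set (EuclideanSpace ℝ (Fin n)))
    (hScompact : IsCompact S) (hSconvex : Convex ℝ S)
    (proj : EuclideanSpace ℝ (Fin n) → EuclideanSpace ℝ (Fin n))
    (hproj : ∀ x, proj x ∈ S ∧ ∀ y ∈ S, ‖x - proj x‖ ≤ ‖x - y‖)
    (A : EuclideanSpace ℝ (Fin n)) :
    ∫ w, ‖proj (A + w) - proj A‖ ^ 2 ∂(stdGaussianE n) ≤ (4 / 3) * gaussComplexity S := by
  rw [gaussComplexity, stdGaussianE_eq_stdGaussian]
  have hμ : Integrable id (stdGaussian (EuclideanSpace ℝ (Fin n))) := IsGaussian.integrable_id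
  have hmean := integral_id_stdGaussian (E := EuclideanSpace ℝ (Fin n))
  have hG := integral_biSup_inner_nonneg ⟨proj 0, (hproj 0).1⟩ hScompact.isBounded hμ hmean
  linarith [integral_norm_proj_add_sub_proj_sq_le hScompact.isBounded hSconvex hproj hμ hmean A]

/-- Stability of projections: for a nonempty compact convex `S ⊆ ℝⁿ`
with Euclidean projection `proj`, for every `A`,
`E_{W∼N(0,Id_n)} ‖proj(A+W) − proj(A)‖² ≤ (4/3)·G(S)`. -/
theorem stability_of_projections
    (n : ℕ) (S : Set (EuclideanSpace ℝ (Fin n)))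
    (hS : S.Nonempty) (hScompact : IsCompact S) (hSconvex : Convex ℝ S)
    (proj : EuclideanSpace ℝ (Fin n) → EuclideanSpace ℝ (Fin n))
    (hproj : ∀ x, proj x ∈ S ∧ ∀ y ∈ S, ‖x - proj x‖ ≤ ‖x - y‖)
    (A : EuclideanSpace ℝ (Fin n)) :
    ∫ w, ‖proj (A + w) - proj A‖ ^ 2 ∂(stdGaussianE n) ≤ (4 / 3) * gaussComplexity S :=
  stability_of_projections_general n S hScompact hSconvex proj hproj A
end

section
/- Let M ∈ ℝ^{n×n} be a symmetric matrix with spectral decomposition M = ∑_i λ_i u_i u_iᵀ, and let M₊ := ∑_{i : λ_i > 0} λ_i u_i u_iᵀ be its positive part. Then for every R > 0, the Frobenius-norm projection of M onto the set S := {X ∈ ℝ^{n×n} : X symmetric positive semidefinite, ‖X‖_F ≤ R} equals min(1, R/‖M₊‖_F)·M₊ (interpreted as 0 when M₊ = 0). In particular, the projection of M onto the positive semidefinite cone is M₊, obtained by zeroing out the negative eigenvalues. -/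
open Matrix

/-- Frobenius (trace) inner product `⟨A, B⟩ = ∑_{i,j} A_{ij}·B_{ij}`. -/
def frobInner {n : ℕ} (A B : Matrix (Fin n) (Fin n) ℝ) : ℝ :=
  ∑ i, ∑ j, A i j * B i j

/-- Frobenius norm of a matrix. -/
noncomputable def frobNorm {n : ℕ} (A : Matrix (Fin n) (Fin n) ℝ) : ℝ :=
  Real.sqrt (∑ i, ∑ j, A i j ^ 2)

/-!
Put `D := M - M₊ = ∑ min(λᵢ, 0) uᵢuᵢᵀ`. Orthonormality of the `uᵢ` gives `⟨D, M₊⟩ = 0` and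
`⟨D, X⟩ = ∑ min(λᵢ, 0) uᵢᵀXuᵢ ≤ 0` for every PSD `X`, hence the Pythagorean inequality
`‖M - X‖² ≥ ‖D‖² + ‖M₊ - X‖²`. If moreover `‖X‖ ≤ R`, then `‖M₊ - X‖ ≥ max(‖M₊‖ - R, 0)`, a bound
attained by `X = min(1, R/‖M₊‖)·M₊`. The minimiser is unique because the constraint set is convex
and the Euclidean norm is strictly convex. Flattening matrices into
`EuclideanSpace ℝ (Fin n × Fin n)` turns `frobInner` and `frobNorm` into its inner product and norm.
-/

open Set Metric
open scoped RealInnerProductSpace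

theorem Convex.isMinOn_norm_sub_iff_eq {E : Type*} [NormedAddCommGroup E] [NormedSpace ℝ E]
    [StrictConvexSpace ℝ E] {s : Set E} (hs : Convex ℝ s) {m p q : E} (hq : q ∈ s)
    (hqm : IsMinOn (fun x => ‖m - x‖) s q) :
    p ∈ s ∧ IsMinOn (fun x => ‖m - x‖) s p ↔ p = q := by
  refine ⟨fun ⟨hp, hpm⟩ => ?_, by rintro rfl; exact ⟨hq, hqm⟩⟩
  by_contra hpq
  have hmid : (1 / 2 : ℝ) • p + (1 / 2 : ℝ) • q ∈ s :=
    hs hp hq (by norm_num) (by norm_num) (by norm_num)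
  have hdist : ‖m - p‖ = ‖m - q‖ := le_antisymm (hpm hq) (hqm hp)
  have hlt := (norm_midpoint_lt_iff hdist).2 (sub_right_injective.ne hpq)
  have hmid_eq : (1 / 2 : ℝ) • (m - p + (m - q)) = m - ((1 / 2 : ℝ) • p + (1 / 2 : ℝ) • q) := by
    module
  rw [hmid_eq] at hlt
  exact (hpm hmid).not_gt hlt

section InnerProductSpace

variable {E : Type*} [NormedAddCommGroup E] [InnerProductSpace ℝ E] {m p : E}

theorem norm_sub_sq_add_norm_sub_sq_le (hp : ⟪m - p, p⟫ = 0) {x : E} (hx : ⟪m - p, x⟫ ≤ 0) :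
    ‖m - p‖ ^ 2 + ‖p - x‖ ^ 2 ≤ ‖m - x‖ ^ 2 := by
  have h : m - x = (m - p) + (p - x) := by abel
  rw [h, norm_add_sq_real, inner_sub_right, hp]
  linarith

theorem norm_sub_smul_sq (hp : ⟪m - p, p⟫ = 0) (t : ℝ) :
    ‖m - t • p‖ ^ 2 = ‖m - p‖ ^ 2 + ((1 - t) * ‖p‖) ^ 2 := by
  have h : m - t • p = (m - p) + (1 - t) • p := by rw [sub_smul, one_smul]; abel
  rw [h, norm_add_sq_real, inner_smul_right, hp, norm_smul, Real.norm_eq_abs, mul_pow, sq_abs]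
  ring

theorem one_sub_min_one_div_mul {r R : ℝ} (hr : 0 ≤ r) (hR : 0 ≤ R) :
    (1 - min 1 (R / r)) * r = max (r - R) 0 := by
  rcases hr.eq_or_lt with rfl | hr
  · simp [hR]
  rcases le_total r R with h | h
  · rw [min_eq_left ((one_le_div hr).2 h), max_eq_right (by linarith)]
    ring
  · rw [min_eq_right ((div_le_one hr).2 h), max_eq_left (by linarith)]
    field_simp

theorem norm_min_one_div_smul_le {R : ℝ} (hR : 0 ≤ R) : ‖min 1 (R / ‖p‖) • p‖ ≤ R := by
  have h := one_sub_min_one_div_mul (norm_nonneg p) hR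
  rw [norm_smul, Real.norm_of_nonneg (le_min zero_le_one (div_nonneg hR (norm_nonneg p)))]
  have : max (‖p‖ - R) 0 ≥ ‖p‖ - R := le_max_left _ _
  nlinarith

variable {C : Set E}

theorem isMinOn_norm_sub_of_inner (hp : ⟪m - p, p⟫ = 0) (hC : ∀ x ∈ C, ⟪m - p, x⟫ ≤ 0) :
    IsMinOn (fun x => ‖m - x‖) C p := fun x hx =>
  (sq_le_sq₀ (norm_nonneg _) (norm_nonneg _)).1 <|
    (le_add_of_nonneg_right (sq_nonneg _)).trans (norm_sub_sq_add_norm_sub_sq_le hp (hC x hx))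

theorem isMinOn_norm_sub_min_one_div_smul_of_inner (hp : ⟪m - p, p⟫ = 0)
    (hC : ∀ x ∈ C, ⟪m - p, x⟫ ≤ 0) {R : ℝ} (hR : 0 ≤ R) :
    IsMinOn (fun x => ‖m - x‖) (C ∩ closedBall 0 R) (min 1 (R / ‖p‖) • p) := by
  rintro x ⟨hxC, hxR⟩
  rw [mem_closedBall_zero_iff] at hxR
  have hgap : max (‖p‖ - R) 0 ≤ ‖p - x‖ :=
    max_le (by linarith [norm_sub_norm_le p x]) (norm_nonneg _)
  refine (sq_le_sq₀ (norm_nonneg _) (norm_nonneg _)).1 ?_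
  calc ‖m - min 1 (R / ‖p‖) • p‖ ^ 2 = ‖m - p‖ ^ 2 + max (‖p‖ - R) 0 ^ 2 := by
        rw [norm_sub_smul_sq hp, one_sub_min_one_div_mul (norm_nonneg p) hR]
    _ ≤ ‖m - p‖ ^ 2 + ‖p - x‖ ^ 2 := by gcongr
    _ ≤ ‖m - x‖ ^ 2 := norm_sub_sq_add_norm_sub_sq_le hp (hC x hxC)

end InnerProductSpace

theorem Finset.sum_smul_sub_sum_max_zero_smul {ι V : Type*} [AddCommGroup V] [Module ℝ V]
    (s : Finset ι) (a : ι → ℝ) (v : ι → V) :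
    ∑ i ∈ s, a i • v i - ∑ i ∈ s, max (a i) 0 • v i = ∑ i ∈ s, min (a i) 0 • v i := by
  rw [← Finset.sum_sub_distrib]
  exact Finset.sum_congr rfl fun i _ => by
    rw [← sub_smul]; congr 1; linarith [min_add_max (a i) 0]

namespace Matrix

variable {ι m : Type*} [Fintype ι] [Fintype m]

theorem posSemidef_sum_smul_vecMulVec_self (u : ι → m → ℝ) {c : ι → ℝ} (hc : ∀ i, 0 ≤ c i) :
    (∑ i, c i • vecMulVec (u i) (u i)).PosSemidef :=
  posSemidef_sum _ fun i _ => by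
    simpa using (posSemidef_vecMulVec_self_star (u i)).smul (hc i)

theorem sum_smul_vecMulVec_self_mulVec [DecidableEq ι] {u : ι → m → ℝ}
    (hu : ∀ i j, u i ⬝ᵥ u j = if i = j then 1 else 0) (c : ι → ℝ) (i : ι) :
    (∑ j, c j • vecMulVec (u j) (u j)) *ᵥ u i = c i • u i := by
  simp [sum_mulVec, smul_mulVec, vecMulVec_mulVec, hu]

omit [Fintype m] in
theorem convex_setOf_posSemidef : Convex ℝ {A : Matrix m m ℝ | A.PosSemidef} :=
  fun _ hA _ hB _ _ ha hb _ => (hA.smul ha).add (hB.smul hb)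

end Matrix

noncomputable def frobToEuclidean (n : ℕ) :
    Matrix (Fin n) (Fin n) ℝ ≃ₗ[ℝ] EuclideanSpace ℝ (Fin n × Fin n) :=
  (LinearEquiv.curry ℝ ℝ (Fin n) (Fin n)).symm ≪≫ₗ (WithLp.linearEquiv 2 ℝ _).symm

section Frobenius

variable {n : ℕ}

@[simp]
theorem frobToEuclidean_apply (A : Matrix (Fin n) (Fin n) ℝ) (p : Fin n × Fin n) :
    frobToEuclidean n A p = A p.1 p.2 :=
  rfl

theorem frobInner_eq_inner (A B : Matrix (Fin n) (Fin n) ℝ) :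
    frobInner A B = ⟪frobToEuclidean n A, frobToEuclidean n B⟫ := by
  simp [frobInner, PiLp.inner_apply, Fintype.sum_prod_type, mul_comm]

theorem frobNorm_eq_norm (A : Matrix (Fin n) (Fin n) ℝ) : frobNorm A = ‖frobToEuclidean n A‖ := by
  simp [frobNorm, EuclideanSpace.norm_eq, Fintype.sum_prod_type]

theorem frobInner_self (A : Matrix (Fin n) (Fin n) ℝ) :
    frobInner A A = ‖frobToEuclidean n A‖ ^ 2 := by
  rw [frobInner_eq_inner, real_inner_self_eq_norm_sq]

theorem frobInner_vecMulVec_self_left (v : Fin n → ℝ) (A : Matrix (Fin n) (Fin n) ℝ) :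
    frobInner (vecMulVec v v) A = v ⬝ᵥ A *ᵥ v := by
  simp only [frobInner, vecMulVec_apply, dotProduct, mulVec, Finset.mul_sum]
  exact Finset.sum_congr rfl fun _ _ => Finset.sum_congr rfl fun _ _ => by ring

theorem frobInner_sum_smul_vecMulVec_self_left (u : Fin n → Fin n → ℝ) (c : Fin n → ℝ)
    (A : Matrix (Fin n) (Fin n) ℝ) :
    frobInner (∑ i, c i • vecMulVec (u i) (u i)) A = ∑ i, c i * (u i ⬝ᵥ A *ᵥ u i) := by
  simp only [frobInner_eq_inner, map_sum, map_smul, sum_inner, real_inner_smul_left,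
    ← frobInner_vecMulVec_self_left]

theorem frobInner_sum_smul_vecMulVec_self_nonpos (u : Fin n → Fin n → ℝ) {c : Fin n → ℝ}
    (hc : ∀ i, c i ≤ 0) {A : Matrix (Fin n) (Fin n) ℝ} (hA : A.PosSemidef) :
    frobInner (∑ i, c i • vecMulVec (u i) (u i)) A ≤ 0 := by
  rw [frobInner_sum_smul_vecMulVec_self_left]
  exact Finset.sum_nonpos fun i _ =>
    mul_nonpos_of_nonpos_of_nonneg (hc i) (hA.dotProduct_mulVec_nonneg (u i))

theorem frobInner_sum_min_smul_sum_max_smul {u : Fin n → Fin n → ℝ}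
    (hu : ∀ i j, u i ⬝ᵥ u j = if i = j then 1 else 0) (lam : Fin n → ℝ) :
    frobInner (∑ i, min (lam i) 0 • vecMulVec (u i) (u i))
      (∑ i, max (lam i) 0 • vecMulVec (u i) (u i)) = 0 := by
  rw [frobInner_sum_smul_vecMulVec_self_left]
  refine Finset.sum_eq_zero fun i _ => ?_
  rw [sum_smul_vecMulVec_self_mulVec hu, dotProduct_smul, hu]
  rcases le_total (lam i) 0 with h | h <;> simp [h]

theorem frobToEuclidean_mem_and_isMinOn_iff {K : Set (Matrix (Fin n) (Fin n) ℝ)} {R : ℝ}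
    {M P : Matrix (Fin n) (Fin n) ℝ} :
    (frobToEuclidean n P ∈ frobToEuclidean n '' K ∩ closedBall 0 R ∧
      IsMinOn (fun x => ‖frobToEuclidean n M - x‖) (frobToEuclidean n '' K ∩ closedBall 0 R)
        (frobToEuclidean n P)) ↔
    P ∈ K ∧ frobNorm P ≤ R ∧
      ∀ X ∈ K, frobNorm X ≤ R → frobInner (M - P) (M - P) ≤ frobInner (M - X) (M - X) := by
  simp only [isMinOn_iff, mem_inter_iff, (frobToEuclidean n).injective.mem_set_image,
    mem_closedBall_zero_iff, mem_image, and_imp, forall_exists_index, forall_apply_eq_imp_iff₂,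
    frobInner_self, map_sub, frobNorm_eq_norm, and_assoc,
    sq_le_sq₀ (norm_nonneg _) (norm_nonneg _)]

end Frobenius

theorem projection_onto_psd_ball_general
    (n : ℕ) (M : Matrix (Fin n) (Fin n) ℝ)
    (lam : Fin n → ℝ) (u : Fin n → (Fin n → ℝ))
    (hortho : ∀ i j, u i ⬝ᵥ u j = if i = j then (1 : ℝ) else 0)
    (hdecomp : M = ∑ i, lam i • Matrix.vecMulVec (u i) (u i))
    (Mplus : Matrix (Fin n) (Fin n) ℝ)
    (hMplus : Mplus = ∑ i, max (lam i) 0 • Matrix.vecMulVec (u i) (u i)) :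
    (∀ R : ℝ, 0 < R →
      ∀ P : Matrix (Fin n) (Fin n) ℝ,
        (P.PosSemidef ∧ frobNorm P ≤ R ∧
          ∀ X : Matrix (Fin n) (Fin n) ℝ, X.PosSemidef → frobNorm X ≤ R →
            frobInner (M - P) (M - P) ≤ frobInner (M - X) (M - X))
          ↔ P = min 1 (R / frobNorm Mplus) • Mplus)
    ∧ Mplus.PosSemidef
    ∧ ∀ X : Matrix (Fin n) (Fin n) ℝ, X.PosSemidef →
        frobInner (M - Mplus) (M - Mplus) ≤ frobInner (M - X) (M - X) := by
  set e := frobToEuclidean n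
  set C := e '' {X | X.PosSemidef}
  have hMplus_psd : Mplus.PosSemidef :=
    hMplus ▸ posSemidef_sum_smul_vecMulVec_self u fun i => le_max_right _ _
  have hgap : M - Mplus = ∑ i, min (lam i) 0 • vecMulVec (u i) (u i) := by
    rw [hdecomp, hMplus, Finset.sum_smul_sub_sum_max_zero_smul]
  have horth : ⟪e M - e Mplus, e Mplus⟫ = 0 := by
    rw [← map_sub, ← frobInner_eq_inner, hgap, hMplus,
      frobInner_sum_min_smul_sum_max_smul hortho]
  have hpolar : ∀ x ∈ C, ⟪e M - e Mplus, x⟫ ≤ 0 := by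
    rintro _ ⟨X, hX, rfl⟩
    rw [← map_sub, ← frobInner_eq_inner, hgap]
    exact frobInner_sum_smul_vecMulVec_self_nonpos u (fun i => min_le_right _ _) hX
  refine ⟨fun R hR P => ?_, hMplus_psd, fun X hX => ?_⟩
  · have hS : Convex ℝ (C ∩ closedBall 0 R) :=
      (convex_setOf_posSemidef.linear_image e.toLinearMap).inter (convex_closedBall 0 R)
    have hq : min 1 (R / ‖e Mplus‖) • e Mplus ∈ C ∩ closedBall 0 R := by
      refine ⟨?_, mem_closedBall_zero_iff.2 (norm_min_one_div_smul_le hR.le)⟩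
      rw [← map_smul]
      exact mem_image_of_mem e (hMplus_psd.smul (le_min zero_le_one (by positivity)))
    rw [frobNorm_eq_norm Mplus, ← e.injective.eq_iff, map_smul, ← hS.isMinOn_norm_sub_iff_eq hq
      (isMinOn_norm_sub_min_one_div_smul_of_inner horth hpolar hR.le)]
    exact (frobToEuclidean_mem_and_isMinOn_iff (K := {X | X.PosSemidef})).symm
  · rw [frobInner_self, frobInner_self, map_sub, map_sub]
    exact pow_le_pow_left₀ (norm_nonneg _)
      (isMinOn_norm_sub_of_inner horth hpolar (mem_image_of_mem e hX)) 2

/-- for a symmetric matrix `M = ∑ᵢ λᵢ uᵢuᵢᵀ` (with `u` an orthonormal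
system of eigenvectors) and its positive part `M₊ = ∑_{i : λᵢ > 0} λᵢ uᵢuᵢᵀ`,
for every `R > 0` the Frobenius projection of `M` onto
`S = {X PSD : ‖X‖_F ≤ R}` equals `min(1, R/‖M₊‖_F)·M₊`; in particular the
projection of `M` onto the PSD cone is `M₊`. -/
theorem projection_onto_psd_ball
    (n : ℕ) (M : Matrix (Fin n) (Fin n) ℝ) (hM : M.IsSymm)
    (lam : Fin n → ℝ) (u : Fin n → (Fin n → ℝ))
    (hortho : ∀ i j, u i ⬝ᵥ u j = if i = j then (1 : ℝ) else 0)
    (hdecomp : M = ∑ i, lam i • Matrix.vecMulVec (u i) (u i))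
    (Mplus : Matrix (Fin n) (Fin n) ℝ)
    (hMplus : Mplus = ∑ i, max (lam i) 0 • Matrix.vecMulVec (u i) (u i)) :
    (∀ R : ℝ, 0 < R →
      ∀ P : Matrix (Fin n) (Fin n) ℝ,
        (P.PosSemidef ∧ frobNorm P ≤ R ∧
          ∀ X : Matrix (Fin n) (Fin n) ℝ, X.PosSemidef → frobNorm X ≤ R →
            frobInner (M - P) (M - P) ≤ frobInner (M - X) (M - X))
          ↔ P = min 1 (R / frobNorm Mplus) • Mplus)
    ∧ Mplus.PosSemidef
    ∧ ∀ X : Matrix (Fin n) (Fin n) ℝ, X.PosSemidef →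
        frobInner (M - Mplus) (M - Mplus) ≤ frobInner (M - X) (M - X) :=
  projection_onto_psd_ball_general n M lam u hortho hdecomp Mplus hMplus
end

section
/- (Sum-of-squares sparse certificates, odd case) There is an absolute constant C > 0 such that the following holds for all n ≥ 2, all odd k ≥ 3 and all 1 ≤ t ≤ n. Let W ∈ (ℝⁿ)^{⊗k} be a random tensor with i.i.d. N(0,1) entries, and let S_{4k−4,n} := { Ẽ_μ[x^{⊗k}] : μ is a degree-(4k−4) pseudo-distribution on ℝ^{3n} satisfying P_t }. Then the Gaussian complexity of S_{4k−4,n} satisfies G(S_{4k−4,n}) = E_W sup_{X ∈ S_{4k−4,n}} ⟨X, W⟩ ≤ C · t^{k/2} · √(k·log n). -/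
open MeasureTheory ProbabilityTheory

/-- Pseudo-expectation `Ẽ_μ[f] = ∑_w μ(w)·f(w)` of a polynomial `f` with respect to a
finitely supported function `μ`. -/
noncomputable def pExp {σ : Type*} (μ : (σ → ℝ) →₀ ℝ) (f : MvPolynomial σ ℝ) : ℝ :=
  μ.sum fun w c => c * MvPolynomial.eval w f

/-- A polynomial is a sum of squares. -/
def IsSOSPoly {σ : Type*} (p : MvPolynomial σ ℝ) : Prop :=
  ∃ (r : ℕ) (q : Fin r → MvPolynomial σ ℝ), p = ∑ i, q i ^ 2

/-- `μ` is a degree-`ℓ` pseudo-distribution: it is finitely supported, has total mass `1`,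
and `Ẽ_μ[f²] ≥ 0` for every polynomial `f` of degree at most `ℓ/2`. -/
def IsPseudoDist {σ : Type*} (ℓ : ℕ) (μ : (σ → ℝ) →₀ ℝ) : Prop :=
  (μ.sum fun _ c => c) = 1 ∧
    ∀ f : MvPolynomial σ ℝ, 2 * f.totalDegree ≤ ℓ → 0 ≤ pExp μ (f ^ 2)

/-- `μ` satisfies the system `{g i ≥ 0}` at degree `ℓ`: for every subset `T` of the
constraints and every sum-of-squares `h` with `deg(h·∏_{i∈T} g i) ≤ ℓ`,
`Ẽ_μ[h·∏_{i∈T} g i] ≥ 0`. -/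
def SatisfiesSystem {σ ι : Type*} (ℓ : ℕ) (μ : (σ → ℝ) →₀ ℝ)
    (g : ι → MvPolynomial σ ℝ) : Prop :=
  ∀ (T : Finset ι) (h : MvPolynomial σ ℝ), IsSOSPoly h →
    (h * ∏ i ∈ T, g i).totalDegree ≤ ℓ →
      0 ≤ pExp μ (h * ∏ i ∈ T, g i)

/-- Index set of the constraints of the system `P_t` (in variables `x, s, y ∈ ℝⁿ`,
encoded on `Fin 3 × Fin n` with `x i = X (0,i)`, `s i = X (1,i)`, `y i = X (2,i)`). -/
inductive PtIdx (n : ℕ) where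
  | normUB
  | boolLB (i : Fin n)
  | boolUB (i : Fin n)
  | suppLB (i : Fin n)
  | suppUB (i : Fin n)
  | sparsity
  | absPos (i : Fin n)
  | absNeg (i : Fin n)
  | sqLB (i : Fin n)
  | sqUB (i : Fin n)

/-- The system `P_t` of polynomial constraints (each polynomial is constrained to be `≥ 0`;
equalities are encoded by two opposite inequalities): `‖x‖² ≤ 1`; `s_i² = s_i`;
`x_i·s_i = x_i`; `∑ s_i ≤ t`; `x_i ≤ y_i`; `−x_i ≤ y_i`; `x_i² = y_i²`. -/
noncomputable def PtSys (n : ℕ) (t : ℝ) : PtIdx n → MvPolynomial (Fin 3 × Fin n) ℝ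
  | .normUB => MvPolynomial.C 1 - ∑ i : Fin n, MvPolynomial.X (0, i) ^ 2
  | .boolLB i => MvPolynomial.X (1, i) - MvPolynomial.X (1, i) ^ 2
  | .boolUB i => MvPolynomial.X (1, i) ^ 2 - MvPolynomial.X (1, i)
  | .suppLB i => MvPolynomial.X (0, i) - MvPolynomial.X (0, i) * MvPolynomial.X (1, i)
  | .suppUB i => MvPolynomial.X (0, i) * MvPolynomial.X (1, i) - MvPolynomial.X (0, i)
  | .sparsity => MvPolynomial.C t - ∑ i : Fin n, MvPolynomial.X (1, i)
  | .absPos i => MvPolynomial.X (2, i) - MvPolynomial.X (0, i)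
  | .absNeg i => MvPolynomial.X (2, i) + MvPolynomial.X (0, i)
  | .sqLB i => MvPolynomial.X (0, i) ^ 2 - MvPolynomial.X (2, i) ^ 2
  | .sqUB i => MvPolynomial.X (2, i) ^ 2 - MvPolynomial.X (0, i) ^ 2

/-- The set `S_{4k−4,n}` of `k`-th moment tensors `Ẽ_μ[x^{⊗k}]` of degree-`(4k−4)`
pseudo-distributions satisfying `P_t`. -/
noncomputable def momentSet (n k : ℕ) (t : ℝ) : Set ((Fin k → Fin n) → ℝ) :=
  {X | ∃ μ : (Fin 3 × Fin n → ℝ) →₀ ℝ,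
    IsPseudoDist (4 * k - 4) μ ∧ SatisfiesSystem (4 * k - 4) μ (PtSys n t) ∧
    ∀ α : Fin k → Fin n, X α = pExp μ (∏ j, MvPolynomial.X (0, α j))}

/-!
For every pseudo-distribution `μ` in the moment set, `⟨Ẽ_μ[x^{⊗k}], W⟩ = Ẽ_μ[⟨W, x^{⊗k}⟩]`,
and pseudo-Cauchy–Schwarz bounds this by `Ẽ_μ[⟨W, x^{⊗k}⟩²]^{1/2}`. A sum-of-squares argument
of degree `2k + 2 ≤ 4k - 4` shows `⟨u, x^{⊗p}⟩² ≤ ‖u‖_∞² ‖s‖^{2p}`: write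
`⟨u, x^{⊗p}⟩ = ∑ⱼ xⱼ rⱼ`, replace `xⱼ` by `xⱼ sⱼ`, apply Cauchy–Schwarz and `‖x‖² ≤ 1`, and
recurse on the `rⱼ`. Since `sᵢ² = sᵢ` and `∑ sᵢ ≤ t`, `Ẽ[‖s‖^{2k}] ≤ t^k`, so every element of
the moment set pairs with `W` to at most `t^{k/2} ‖W‖_∞`.

It remains to bound `E ‖W‖_∞` over the `n^k` standard Gaussian entries: pointwise
`|w| ≤ b + e^{-b²}/b · (e^{bw} + e^{-bw})` and `E e^{bg} = e^{b²/2}`, so `b = √(2k log n)` gives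
`E ‖W‖_∞ ≤ b + 2/b`.
-/

open MvPolynomial

theorem Finset.sum_sq_mul_sum_sq_sub_sq_sum_mul {ι R : Type*} [CommRing R] [Fintype ι]
    (a b : ι → R) :
    ((∑ i, a i ^ 2) * (∑ i, b i ^ 2) - (∑ i, a i * b i) ^ 2) * 2
      = ∑ i, ∑ j, (a i * b j - a j * b i) ^ 2 := by
  have expand : ∀ i j, (a i * b j - a j * b i) ^ 2
      = a i ^ 2 * b j ^ 2 + a j ^ 2 * b i ^ 2 - 2 * (a i * b i) * (a j * b j) := fun i j => by
    ring
  simp only [expand, Finset.sum_add_distrib, Finset.sum_sub_distrib, ← Finset.mul_sum,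
    ← Finset.sum_mul]
  ring

theorem MvPolynomial.totalDegree_mul_le_of_le {σ R : Type*} [CommSemiring R]
    {p q : MvPolynomial σ R} {a b : ℕ} (hp : p.totalDegree ≤ a) (hq : q.totalDegree ≤ b) :
    (p * q).totalDegree ≤ a + b :=
  (totalDegree_mul p q).trans (add_le_add hp hq)

theorem MvPolynomial.exists_mul_eq_monomial_of_degree_le {σ R : Type*} [CommSemiring R]
    {v : σ →₀ ℕ} {d : ℕ} (hv : v.degree ≤ 2 * d) (c : R) :
    ∃ a b : MvPolynomial σ R, a.totalDegree ≤ d ∧ b.totalDegree ≤ d ∧ a * b = monomial v c := by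
  obtain ⟨u, huv, hu⟩ := v.exists_le_degree_eq (v.degree / 2) (Nat.div_le_self _ _)
  obtain ⟨w, rfl⟩ := le_iff_exists_add.mp huv
  rw [map_add] at hu hv
  refine ⟨monomial u c, monomial w 1, ?_, ?_, by rw [monomial_mul, mul_one]⟩
  · exact (totalDegree_monomial_le u c).trans (show u.degree ≤ d by omega)
  · exact (totalDegree_monomial_le w 1).trans (show w.degree ≤ d by omega)

section PseudoExpectation

variable {σ ι : Type*} {ℓ : ℕ} {μ : (σ → ℝ) →₀ ℝ}

theorem pExp_add (f g : MvPolynomial σ ℝ) : pExp μ (f + g) = pExp μ f + pExp μ g := by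
  simp [pExp, Finsupp.sum, mul_add, Finset.sum_add_distrib]

theorem pExp_sub (f g : MvPolynomial σ ℝ) : pExp μ (f - g) = pExp μ f - pExp μ g := by
  simp [pExp, Finsupp.sum, mul_sub, Finset.sum_sub_distrib]

theorem pExp_C_mul (c : ℝ) (f : MvPolynomial σ ℝ) : pExp μ (C c * f) = c * pExp μ f := by
  simp only [pExp, Finsupp.sum, eval_mul, eval_C, Finset.mul_sum]
  exact Finset.sum_congr rfl fun _ _ => by ring

theorem pExp_sum (s : Finset ι) (f : ι → MvPolynomial σ ℝ) :
    pExp μ (∑ i ∈ s, f i) = ∑ i ∈ s, pExp μ (f i) := by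
  simp only [pExp, Finsupp.sum, map_sum, Finset.mul_sum]
  exact Finset.sum_comm

theorem isSOSPoly_sq (q : MvPolynomial σ ℝ) : IsSOSPoly (q ^ 2) :=
  ⟨1, fun _ => q, by simp⟩

theorem isSOSPoly_sum_sq [Fintype ι] (q : ι → MvPolynomial σ ℝ) : IsSOSPoly (∑ i, q i ^ 2) :=
  ⟨_, q ∘ (Fintype.equivFin ι).symm, (Equiv.sum_comp (Fintype.equivFin ι).symm (q · ^ 2)).symm⟩

theorem IsSOSPoly.mul {p q : MvPolynomial σ ℝ} (hp : IsSOSPoly p) (hq : IsSOSPoly q) :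
    IsSOSPoly (p * q) := by
  obtain ⟨r, a, rfl⟩ := hp
  obtain ⟨r', b, rfl⟩ := hq
  simpa [Finset.sum_mul_sum, mul_pow, ← Finset.sum_product'] using
    isSOSPoly_sum_sq fun ij : Fin r × Fin r' => a ij.1 * b ij.2

theorem IsSOSPoly.pow {p : MvPolynomial σ ℝ} (hp : IsSOSPoly p) (m : ℕ) : IsSOSPoly (p ^ m) := by
  induction m with
  | zero => simpa using isSOSPoly_sq (1 : MvPolynomial σ ℝ)
  | succ m ih => simpa [pow_succ] using ih.mul hp

theorem IsPseudoDist.pExp_one (h : IsPseudoDist ℓ μ) : pExp μ (1 : MvPolynomial σ ℝ) = 1 := by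
  simpa [pExp] using h.1

theorem IsPseudoDist.sq_pExp_le (h : IsPseudoDist ℓ μ) {f : MvPolynomial σ ℝ}
    (hf : 2 * f.totalDegree ≤ ℓ) : pExp μ f ^ 2 ≤ pExp μ (f ^ 2) := by
  have hsq := h.2 (f - C (pExp μ f)) ((Nat.mul_le_mul_left 2 (totalDegree_sub_C_le _ _)).trans hf)
  have hexp : (f - C (pExp μ f)) ^ 2 = f ^ 2 - C (2 * pExp μ f) * f + C (pExp μ f ^ 2) * 1 := by
    simp only [map_mul, map_pow, map_ofNat]; ring
  rw [hexp, pExp_add, pExp_sub, pExp_C_mul, pExp_C_mul, h.pExp_one] at hsq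
  linarith

theorem IsPseudoDist.pExp_mul_sq_sum_mul_le [Fintype ι] (h : IsPseudoDist ℓ μ)
    (ς : MvPolynomial σ ℝ) (a b : ι → MvPolynomial σ ℝ) {da db : ℕ}
    (ha : ∀ i, (a i).totalDegree ≤ da) (hb : ∀ i, (b i).totalDegree ≤ db)
    (hℓ : 2 * (ς.totalDegree + da + db) ≤ ℓ) :
    pExp μ (ς ^ 2 * (∑ i, a i * b i) ^ 2) ≤
      pExp μ (ς ^ 2 * ((∑ i, a i ^ 2) * ∑ i, b i ^ 2)) := by
  have hab : ∀ i j, (a i * b j).totalDegree ≤ da + db := fun i j =>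
    totalDegree_mul_le_of_le (ha i) (hb j)
  have hdefect : 0 ≤ pExp μ (∑ i, ∑ j, (ς * (a i * b j - a j * b i)) ^ 2) := by
    simp only [pExp_sum]
    refine Finset.sum_nonneg fun i _ => Finset.sum_nonneg fun j _ => h.2 _ ?_
    have := totalDegree_mul_le_of_le (le_refl ς.totalDegree)
      ((totalDegree_sub _ _).trans (max_le (hab i j) (hab j i)))
    omega
  have lagrange : ∑ i, ∑ j, (ς * (a i * b j - a j * b i)) ^ 2
      = C 2 * (ς ^ 2 * ((∑ i, a i ^ 2) * ∑ i, b i ^ 2)) - C 2 * (ς ^ 2 * (∑ i, a i * b i) ^ 2) := by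
    simp only [mul_pow, ← Finset.mul_sum, ← Finset.sum_sq_mul_sum_sq_sub_sq_sum_mul, map_ofNat]
    ring
  rw [lagrange, pExp_sub, pExp_C_mul, pExp_C_mul] at hdefect
  linarith

variable {g : ι → MvPolynomial σ ℝ}

theorem SatisfiesSystem.pExp_mul_nonneg (h : SatisfiesSystem ℓ μ g) (c : ι)
    {s : MvPolynomial σ ℝ} (hs : IsSOSPoly s) (hd : s.totalDegree + (g c).totalDegree ≤ ℓ) :
    0 ≤ pExp μ (s * g c) := by
  simpa using h {c} s hs (by simpa using (totalDegree_mul s (g c)).trans hd)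

/-- Splitting each monomial of `p` as `a * b` and polarizing, `2ab = (a + b)² - a² - b²`,
it suffices to treat `p = a²`, where `Ẽ[a² g c] ≥ 0` and `Ẽ[a² (-g c)] ≥ 0`. -/
theorem SatisfiesSystem.pExp_mul_eq_zero (h : SatisfiesSystem ℓ μ g) {c c' : ι}
    (hneg : g c' = -g c) {d : ℕ} (hd : 2 * d + (g c).totalDegree ≤ ℓ)
    {p : MvPolynomial σ ℝ} (hp : p.totalDegree ≤ 2 * d) : pExp μ (g c * p) = 0 := by
  have sq_mul_eq_zero : ∀ a : MvPolynomial σ ℝ, a.totalDegree ≤ d → pExp μ (a ^ 2 * g c) = 0 := by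
    intro a ha
    have hdeg : (a ^ 2).totalDegree ≤ 2 * d := (totalDegree_pow a 2).trans (by omega)
    have hpos := h.pExp_mul_nonneg c (isSOSPoly_sq a) (by omega)
    have hneg' := h.pExp_mul_nonneg c' (isSOSPoly_sq a) (by rw [hneg, totalDegree_neg]; omega)
    have hflip : a ^ 2 * g c' = C (-1) * (a ^ 2 * g c) := by rw [hneg, map_neg, map_one]; ring
    rw [hflip, pExp_C_mul] at hneg'
    linarith
  have mul_mul_eq_zero : ∀ a b : MvPolynomial σ ℝ, a.totalDegree ≤ d → b.totalDegree ≤ d →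
      pExp μ (g c * (a * b)) = 0 := by
    intro a b ha hb
    have polarize : C 2 * (g c * (a * b)) = (a + b) ^ 2 * g c - a ^ 2 * g c - b ^ 2 * g c := by
      rw [map_ofNat]; ring
    have := congrArg (pExp μ) polarize
    rw [pExp_C_mul, pExp_sub, pExp_sub, sq_mul_eq_zero a ha, sq_mul_eq_zero b hb,
      sq_mul_eq_zero _ ((totalDegree_add a b).trans (max_le ha hb))] at this
    linarith
  rw [as_sum p, Finset.mul_sum, pExp_sum]
  refine Finset.sum_eq_zero fun v hv => ?_
  obtain ⟨a, b, ha, hb, hab⟩ := exists_mul_eq_monomial_of_degree_le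
    ((le_totalDegree hv).trans hp) (coeff v p)
  rw [← hab, mul_mul_eq_zero a b ha hb]

end PseudoExpectation

section SparseSystem

variable {n : ℕ} {t : ℝ} {ℓ : ℕ} {μ : (Fin 3 × Fin n → ℝ) →₀ ℝ}

noncomputable abbrev xVar (i : Fin n) : MvPolynomial (Fin 3 × Fin n) ℝ := X (0, i)

noncomputable abbrev sVar (i : Fin n) : MvPolynomial (Fin 3 × Fin n) ℝ := X (1, i)

theorem totalDegree_PtSys_le (c : PtIdx n) : (PtSys n t c).totalDegree ≤ 2 := by
  have hC : ∀ r : ℝ, (C r : MvPolynomial (Fin 3 × Fin n) ℝ).totalDegree ≤ 2 :=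
    fun r => (totalDegree_C r).trans_le zero_le_two
  have hX : ∀ a : Fin 3 × Fin n, (X a : MvPolynomial (Fin 3 × Fin n) ℝ).totalDegree ≤ 2 :=
    fun a => (totalDegree_X a).trans_le one_le_two
  have hXX : ∀ a b : Fin 3 × Fin n,
      (X a * X b : MvPolynomial (Fin 3 × Fin n) ℝ).totalDegree ≤ 2 :=
    fun a b => (totalDegree_mul _ _).trans (by rw [totalDegree_X, totalDegree_X])
  cases c <;> simp only [PtSys, sq, sub_eq_add_neg] <;>
    refine (totalDegree_add _ _).trans (max_le ?_ ?_) <;> try rw [totalDegree_neg]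
  all_goals with_reducible_and_instances first
    | exact hC _
    | exact hX _
    | exact hXX _ _
    | exact totalDegree_finsetSum_le fun _ _ => hX _
    | exact totalDegree_finsetSum_le fun _ _ => hXX _ _

theorem totalDegree_sum_sVar_sq_le : (∑ i : Fin n, sVar i ^ 2).totalDegree ≤ 2 :=
  totalDegree_finsetSum_le fun i _ => (totalDegree_pow _ 2).trans (by simp)

noncomputable def tensorForm {p : ℕ} (u : (Fin p → Fin n) → ℝ) : MvPolynomial (Fin 3 × Fin n) ℝ :=
  ∑ δ, C (u δ) * ∏ j, xVar (δ j)

theorem totalDegree_tensorForm_le {p : ℕ} (u : (Fin p → Fin n) → ℝ) :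
    (tensorForm u).totalDegree ≤ p :=
  totalDegree_finsetSum_le fun δ _ => (totalDegree_mul _ _).trans <| by
    simpa using (totalDegree_finsetProd _ _).trans (by simp)

theorem tensorForm_zero (u : (Fin 0 → Fin n) → ℝ) : tensorForm u = C (u Fin.elim0) := by
  simp [tensorForm, Unique.eq_default Fin.elim0]

theorem tensorForm_succ {p : ℕ} (u : (Fin (p + 1) → Fin n) → ℝ) :
    tensorForm u = ∑ j, xVar j * tensorForm fun δ => u (Fin.cons j δ) := by
  simp only [tensorForm, ← (Fin.consEquiv fun _ => Fin n).sum_comp, Fintype.sum_prod_type,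
    Finset.mul_sum]
  refine Finset.sum_congr rfl fun j _ => Finset.sum_congr rfl fun δ _ => ?_
  simp [Fin.consEquiv, Fin.prod_univ_succ]
  ring

namespace SatisfiesSystem

theorem pExp_xVar_mul_sVar_mul (h : SatisfiesSystem ℓ μ (PtSys n t)) (i : Fin n) {d : ℕ}
    (hd : 2 * d + 2 ≤ ℓ) {p : MvPolynomial (Fin 3 × Fin n) ℝ} (hp : p.totalDegree ≤ 2 * d) :
    pExp μ (xVar i * sVar i * p) = pExp μ (xVar i * p) := by
  have := h.pExp_mul_eq_zero (c := .suppUB i) (c' := .suppLB i) (by simp [PtSys])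
    ((Nat.add_le_add_left (totalDegree_PtSys_le _) _).trans hd) hp
  rw [PtSys, sub_mul, pExp_sub] at this
  linarith

theorem pExp_sVar_sq_mul (h : SatisfiesSystem ℓ μ (PtSys n t)) (i : Fin n) {d : ℕ}
    (hd : 2 * d + 2 ≤ ℓ) {p : MvPolynomial (Fin 3 × Fin n) ℝ} (hp : p.totalDegree ≤ 2 * d) :
    pExp μ (sVar i ^ 2 * p) = pExp μ (sVar i * p) := by
  have := h.pExp_mul_eq_zero (c := .boolUB i) (c' := .boolLB i) (by simp [PtSys])
    ((Nat.add_le_add_left (totalDegree_PtSys_le _) _).trans hd) hp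
  rw [PtSys, sub_mul, pExp_sub] at this
  linarith

theorem pExp_mul_sum_xVar_sq_le (h : SatisfiesSystem ℓ μ (PtSys n t))
    {s : MvPolynomial (Fin 3 × Fin n) ℝ} (hs : IsSOSPoly s) (hd : s.totalDegree + 2 ≤ ℓ) :
    pExp μ (s * ∑ i, xVar i ^ 2) ≤ pExp μ s := by
  have := h.pExp_mul_nonneg .normUB hs
    ((Nat.add_le_add_left (totalDegree_PtSys_le _) _).trans hd)
  rw [PtSys, map_one, mul_sub, mul_one, pExp_sub] at this
  linarith

theorem pExp_mul_sum_sVar_le (h : SatisfiesSystem ℓ μ (PtSys n t))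
    {s : MvPolynomial (Fin 3 × Fin n) ℝ} (hs : IsSOSPoly s) (hd : s.totalDegree + 2 ≤ ℓ) :
    pExp μ (s * ∑ i, sVar i) ≤ t * pExp μ s := by
  have := h.pExp_mul_nonneg .sparsity hs
    ((Nat.add_le_add_left (totalDegree_PtSys_le _) _).trans hd)
  rw [PtSys, mul_sub, mul_comm s, pExp_sub, pExp_C_mul] at this
  linarith

theorem pExp_sum_sVar_sq_pow_le (h : SatisfiesSystem ℓ μ (PtSys n t))
    (hpd : IsPseudoDist ℓ μ) (ht : 0 ≤ t) {r : ℕ} (hr : 2 * r ≤ ℓ) :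
    pExp μ ((∑ i, sVar i ^ 2) ^ r) ≤ t ^ r := by
  induction r with
  | zero => simp [hpd.pExp_one]
  | succ r ih =>
    set S := ∑ i : Fin n, sVar i ^ 2
    have hSr : (S ^ r).totalDegree ≤ 2 * r := (totalDegree_pow S r).trans
      ((Nat.mul_le_mul_left r totalDegree_sum_sVar_sq_le).trans_eq (mul_comm r 2))
    calc pExp μ (S ^ (r + 1)) = ∑ i, pExp μ (sVar i ^ 2 * S ^ r) := by
          rw [pow_succ', Finset.sum_mul, pExp_sum]
      _ = ∑ i, pExp μ (S ^ r * sVar i) := Finset.sum_congr rfl fun i _ => by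
          rw [h.pExp_sVar_sq_mul i (by omega) hSr, mul_comm]
      _ ≤ t * pExp μ (S ^ r) := by
          rw [← pExp_sum, ← Finset.mul_sum]
          exact h.pExp_mul_sum_sVar_le ((isSOSPoly_sum_sq sVar).pow r) (by omega)
      _ ≤ t ^ (r + 1) := by
          rw [pow_succ']; exact mul_le_mul_of_nonneg_left (ih (by omega)) ht

theorem pExp_mul_sum_xVar_mul_sVar_mul (h : SatisfiesSystem ℓ μ (PtSys n t))
    (m : MvPolynomial (Fin 3 × Fin n) ℝ) (r : Fin n → MvPolynomial (Fin 3 × Fin n) ℝ) {d : ℕ}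
    (hd : 2 * d + 2 ≤ ℓ) (hr : ∀ j, (m * r j).totalDegree ≤ 2 * d) :
    pExp μ (m * ∑ j, xVar j * (sVar j * r j)) = pExp μ (m * ∑ j, xVar j * r j) := by
  simp only [Finset.mul_sum, pExp_sum]
  refine Finset.sum_congr rfl fun j _ => ?_
  rw [show m * (xVar j * (sVar j * r j)) = xVar j * sVar j * (m * r j) by ring,
    h.pExp_xVar_mul_sVar_mul j hd (hr j), mul_left_comm]

theorem pExp_sq_mul_sq_sum_xVar_mul_sVar_mul (h : SatisfiesSystem ℓ μ (PtSys n t))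
    (ς : MvPolynomial (Fin 3 × Fin n) ℝ) (r : Fin n → MvPolynomial (Fin 3 × Fin n) ℝ) {d : ℕ}
    (hr : ∀ j, (r j).totalDegree ≤ d) (hℓ : 2 * (ς.totalDegree + d + 1) + 2 ≤ ℓ) :
    pExp μ (ς ^ 2 * (∑ j, xVar j * (sVar j * r j)) ^ 2) =
      pExp μ (ς ^ 2 * (∑ j, xVar j * r j) ^ 2) := by
  set e := ∑ j, xVar j * r j
  set e' := ∑ j, xVar j * (sVar j * r j)
  have he : e.totalDegree ≤ d + 1 := totalDegree_finsetSum_le fun j _ =>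
    (totalDegree_mul_le_of_le (totalDegree_X _).le (hr j)).trans_eq (add_comm _ _)
  have he' : e'.totalDegree ≤ d + 2 := totalDegree_finsetSum_le fun j _ =>
    (totalDegree_mul_le_of_le (totalDegree_X _).le
      (totalDegree_mul_le_of_le (totalDegree_X _).le (hr j))).trans (by omega)
  have hς : (ς ^ 2).totalDegree ≤ 2 * ς.totalDegree := totalDegree_pow ς 2
  have hdeg : ∀ {f : MvPolynomial (Fin 3 × Fin n) ℝ}, f.totalDegree ≤ d + 2 →
      ∀ j, (ς ^ 2 * f * r j).totalDegree ≤ 2 * (ς.totalDegree + d + 1) := fun hf j =>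
    (totalDegree_mul_le_of_le (totalDegree_mul_le_of_le hς hf) (hr j)).trans (by omega)
  calc pExp μ (ς ^ 2 * e' ^ 2) = pExp μ (ς ^ 2 * e' * e') := by ring_nf
    _ = pExp μ (ς ^ 2 * e' * e) := h.pExp_mul_sum_xVar_mul_sVar_mul _ r hℓ (hdeg he')
    _ = pExp μ (ς ^ 2 * e * e') := by ring_nf
    _ = pExp μ (ς ^ 2 * e * e) := h.pExp_mul_sum_xVar_mul_sVar_mul _ r hℓ (hdeg (by omega))
    _ = pExp μ (ς ^ 2 * e ^ 2) := by ring_nf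

/-- The multiplier `ς²` absorbs the factors `sⱼ²` produced at each step of the induction. -/
theorem pExp_sq_mul_tensorForm_sq_le (h : SatisfiesSystem ℓ μ (PtSys n t))
    (hpd : IsPseudoDist ℓ μ) {M : ℝ} {p : ℕ} (ς : MvPolynomial (Fin 3 × Fin n) ℝ)
    (u : (Fin p → Fin n) → ℝ) (hu : ∀ δ, |u δ| ≤ M) (hℓ : 2 * (ς.totalDegree + p) + 2 ≤ ℓ) :
    pExp μ (ς ^ 2 * tensorForm u ^ 2) ≤ M ^ 2 * pExp μ (ς ^ 2 * (∑ i, sVar i ^ 2) ^ p) := by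
  induction p generalizing ς with
  | zero =>
    rw [tensorForm_zero, pow_zero, mul_one, ← map_pow, mul_comm, pExp_C_mul]
    exact mul_le_mul_of_nonneg_right (sq_le_sq' (abs_le.mp (hu _)).1 (abs_le.mp (hu _)).2)
      (hpd.2 ς (by omega))
  | succ p ih =>
    set r : Fin n → MvPolynomial (Fin 3 × Fin n) ℝ := fun j => tensorForm fun δ => u (Fin.cons j δ)
    have hr : ∀ j, (r j).totalDegree ≤ p := fun j => totalDegree_tensorForm_le _
    have hsr : ∀ j, (sVar j * r j).totalDegree ≤ 1 + p := fun j =>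
      totalDegree_mul_le_of_le (totalDegree_X _).le (hr j)
    have hςs : ∀ j, (ς * sVar j).totalDegree ≤ ς.totalDegree + 1 := fun j =>
      totalDegree_mul_le_of_le le_rfl (totalDegree_X _).le
    have hQ : (ς ^ 2 * ∑ j, (sVar j * r j) ^ 2).totalDegree ≤ 2 * ς.totalDegree + 2 * (1 + p) :=
      totalDegree_mul_le_of_le (totalDegree_pow ς 2) (totalDegree_finsetSum_le fun j _ =>
        (totalDegree_pow _ 2).trans (Nat.mul_le_mul_left 2 (hsr j)))
    calc pExp μ (ς ^ 2 * tensorForm u ^ 2)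
        = pExp μ (ς ^ 2 * (∑ j, xVar j * (sVar j * r j)) ^ 2) := by
          rw [tensorForm_succ, h.pExp_sq_mul_sq_sum_xVar_mul_sVar_mul ς r hr (by omega)]
      _ ≤ pExp μ (ς ^ 2 * ((∑ j, xVar j ^ 2) * ∑ j, (sVar j * r j) ^ 2)) :=
          hpd.pExp_mul_sq_sum_mul_le ς xVar _ (fun j => (totalDegree_X _).le) hsr (by omega)
      _ ≤ pExp μ (ς ^ 2 * ∑ j, (sVar j * r j) ^ 2) := by
          rw [mul_left_comm, mul_comm]
          exact h.pExp_mul_sum_xVar_sq_le ((isSOSPoly_sq ς).mul (isSOSPoly_sum_sq _))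
            (by omega)
      _ = ∑ j, pExp μ ((ς * sVar j) ^ 2 * r j ^ 2) := by
          rw [Finset.mul_sum, pExp_sum]
          exact Finset.sum_congr rfl fun j _ => by ring_nf
      _ ≤ ∑ j, M ^ 2 * pExp μ ((ς * sVar j) ^ 2 * (∑ i, sVar i ^ 2) ^ p) :=
          Finset.sum_le_sum fun j _ => ih _ _ (fun δ => hu _) (by have := hςs j; omega)
      _ = M ^ 2 * pExp μ (ς ^ 2 * (∑ i, sVar i ^ 2) ^ (p + 1)) := by
          rw [← Finset.mul_sum, ← pExp_sum, pow_succ' (∑ i, sVar i ^ 2), Finset.sum_mul,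
            Finset.mul_sum]
          exact congrArg _ (congrArg _ (Finset.sum_congr rfl fun j _ => by ring))

theorem pExp_tensorForm_le (h : SatisfiesSystem ℓ μ (PtSys n t)) (hpd : IsPseudoDist ℓ μ)
    (ht : 0 ≤ t) {k : ℕ} (hℓ : 2 * k + 2 ≤ ℓ) {M : ℝ} (hM : 0 ≤ M) (w : (Fin k → Fin n) → ℝ)
    (hw : ∀ α, |w α| ≤ M) : pExp μ (tensorForm w) ≤ M * √(t ^ k) := by
  have hsq : pExp μ (tensorForm w) ^ 2 ≤ (M * √(t ^ k)) ^ 2 := calc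
    _ ≤ pExp μ (tensorForm w ^ 2) :=
        hpd.sq_pExp_le (by have := totalDegree_tensorForm_le w; omega)
    _ ≤ M ^ 2 * pExp μ ((∑ i, sVar i ^ 2) ^ k) := by
        simpa using h.pExp_sq_mul_tensorForm_sq_le hpd 1 w hw (by simpa using hℓ)
    _ ≤ M ^ 2 * t ^ k :=
        mul_le_mul_of_nonneg_left (h.pExp_sum_sVar_sq_pow_le hpd ht (by omega)) (sq_nonneg M)
    _ = (M * √(t ^ k)) ^ 2 := by rw [mul_pow, Real.sq_sqrt (pow_nonneg ht k)]
  exact (le_abs_self _).trans (abs_le_of_sq_le_sq hsq (by positivity))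

end SatisfiesSystem

theorem sum_mul_le_of_mem_momentSet {n k : ℕ} {t : ℝ} {X : (Fin k → Fin n) → ℝ}
    (hX : X ∈ momentSet n k t) (hk : 3 ≤ k) (ht : 0 ≤ t) {M : ℝ} (hM : 0 ≤ M)
    (w : (Fin k → Fin n) → ℝ) (hw : ∀ α, |w α| ≤ M) : ∑ α, X α * w α ≤ M * √(t ^ k) := by
  obtain ⟨μ, hpd, hsat, hXμ⟩ := hX
  have hpair : ∑ α, X α * w α = pExp μ (tensorForm w) := by
    simp [tensorForm, pExp_sum, pExp_C_mul, hXμ, mul_comm]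
  rw [hpair]
  exact hsat.pExp_tensorForm_le hpd ht (by omega) hM w hw

end SparseSystem

section Gaussian

variable {ι : Type*} [Fintype ι]

/-- Smooth majorant of `maxᵢ |wᵢ|`, whose Gaussian expectation is explicit. -/
noncomputable def expMajorant (b : ℝ) (w : ι → ℝ) : ℝ :=
  b + Real.exp (-b ^ 2) / b * ∑ i, (Real.exp (b * w i) + Real.exp (-b * w i))

theorem expMajorant_nonneg {b : ℝ} (hb : 0 < b) (w : ι → ℝ) : 0 ≤ expMajorant b w := by
  unfold expMajorant; positivity

theorem abs_le_expMajorant {b : ℝ} (hb : 0 < b) (w : ι → ℝ) (i : ι) :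
    |w i| ≤ expMajorant b w := by
  have hlin : b * (|w i| - b) ≤ Real.exp (b * (|w i| - b)) := by
    linarith [Real.add_one_le_exp (b * (|w i| - b))]
  have hexp : Real.exp (b * |w i|) ≤ Real.exp (b * w i) + Real.exp (-b * w i) := by
    rcases abs_choice (w i) with h | h <;> rw [h] <;> [linarith [Real.exp_pos (-b * w i)];
      (rw [mul_neg, ← neg_mul]; linarith [Real.exp_pos (b * w i)])]
  have hsum : Real.exp (b * w i) + Real.exp (-b * w i) ≤
      ∑ j, (Real.exp (b * w j) + Real.exp (-b * w j)) :=
    Finset.single_le_sum (f := fun j => Real.exp (b * w j) + Real.exp (-b * w j))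
      (fun j _ => by positivity) (Finset.mem_univ i)
  have key : |w i| - b ≤ Real.exp (-b ^ 2) / b * Real.exp (b * |w i|) := by
    rw [div_mul_eq_mul_div, ← Real.exp_add, le_div_iff₀ hb,
      show -b ^ 2 + b * |w i| = b * (|w i| - b) by ring]
    linarith
  unfold expMajorant
  nlinarith [Real.exp_pos (-b ^ 2), div_pos (Real.exp_pos (-b ^ 2)) hb]

theorem integrable_exp_mul_eval_gaussian (i : ι) (c : ℝ) :
    Integrable (fun w : ι → ℝ => Real.exp (c * w i)) (Measure.pi fun _ => gaussianReal 0 1) :=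
  ((measurePreserving_eval (μ := fun _ : ι => gaussianReal 0 1) i).integrable_comp
    (by fun_prop)).mpr (integrable_exp_mul_gaussianReal c)

theorem integral_exp_mul_eval_gaussian (i : ι) (c : ℝ) :
    ∫ w, Real.exp (c * w i) ∂(Measure.pi fun _ : ι => gaussianReal 0 1) = Real.exp (c ^ 2 / 2) := by
  simpa [mgf] using mgf_gaussianReal (measurePreserving_eval
    (μ := fun _ : ι => gaussianReal 0 1) i).map_eq c

theorem integrable_expMajorant (b : ℝ) :
    Integrable (expMajorant b) (Measure.pi fun _ : ι => gaussianReal 0 1) :=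
  (integrable_const b).add <| (integrable_finsetSum _ fun i _ =>
    (integrable_exp_mul_eval_gaussian i b).add
      (integrable_exp_mul_eval_gaussian i (-b))).const_mul _

theorem integral_expMajorant {b : ℝ} (hb : 0 < b) :
    ∫ w, expMajorant b w ∂(Measure.pi fun _ : ι => gaussianReal 0 1) =
      b + 2 * Fintype.card ι * Real.exp (-b ^ 2 / 2) / b := by
  have hint : ∀ c : ℝ, ∀ i : ι,
      Integrable (fun w : ι → ℝ => Real.exp (c * w i)) (Measure.pi fun _ => gaussianReal 0 1) :=
    fun c i => integrable_exp_mul_eval_gaussian i c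
  have hpair : ∀ i : ι, Integrable (fun w : ι → ℝ => Real.exp (b * w i) + Real.exp (-b * w i))
      (Measure.pi fun _ => gaussianReal 0 1) :=
    fun i => (hint b i).add (hint (-b) i)
  unfold expMajorant
  rw [integral_add (integrable_const b) ((integrable_finsetSum _ fun i _ => hpair i).const_mul _),
    integral_const_mul, integral_finsetSum _ fun i _ => hpair i]
  simp only [integral_add (hint _ _) (hint _ _), integral_exp_mul_eval_gaussian, integral_const,
    probReal_univ, one_smul, Finset.sum_const, Finset.card_univ, nsmul_eq_mul]
  rw [neg_sq, show -b ^ 2 / 2 = -b ^ 2 + b ^ 2 / 2 by ring, Real.exp_add]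
  field_simp
  ring

theorem integral_iSup_le_of_forall_sum_mul_le (S : Set (ι → ℝ)) {c b : ℝ} (hc : 0 ≤ c) (hb : 0 < b)
    (hS : ∀ X ∈ S, ∀ (M : ℝ) (w : ι → ℝ), 0 ≤ M → (∀ i, |w i| ≤ M) → ∑ i, X i * w i ≤ M * c) :
    ∫ w, (⨆ X ∈ S, ∑ i, X i * w i) ∂(Measure.pi fun _ : ι => gaussianReal 0 1) ≤
      c * (b + 2 * Fintype.card ι * Real.exp (-b ^ 2 / 2) / b) := by
  have hmaj : ∀ w : ι → ℝ, 0 ≤ c * expMajorant b w := fun w =>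
    mul_nonneg hc (expMajorant_nonneg hb w)
  have hsup : ∀ w : ι → ℝ, (⨆ X ∈ S, ∑ i, X i * w i) ≤ c * expMajorant b w := fun w =>
    Real.iSup_le (fun X => Real.iSup_le (fun hX =>
      (hS X hX _ w (expMajorant_nonneg hb w) (abs_le_expMajorant hb w)).trans_eq (mul_comm _ _))
      (hmaj w)) (hmaj w)
  by_cases hF : Integrable (fun w => ⨆ X ∈ S, ∑ i, X i * w i)
    (Measure.pi fun _ : ι => gaussianReal 0 1)
  · calc _ ≤ ∫ w, c * expMajorant b w ∂(Measure.pi fun _ : ι => gaussianReal 0 1) :=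
          integral_mono hF ((integrable_expMajorant b).const_mul c) hsup
      _ = _ := by rw [integral_const_mul, integral_expMajorant hb]
  · rw [integral_undef hF]
    exact mul_nonneg hc (by positivity)

end Gaussian

/-- The choice `b = √(2 log N)` makes `N e^{-b²/2} = 1`. -/
theorem exists_pos_add_two_mul_exp_div_le {N : ℝ} (hN : 0 < N) (hlog : 1 ≤ Real.log N) :
    ∃ b > 0, b + 2 * N * Real.exp (-b ^ 2 / 2) / b ≤ 4 * √(Real.log N) := by
  set R := √(Real.log N)
  have hR : 1 ≤ R := Real.one_le_sqrt.mpr hlog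
  have hb : 1 ≤ √2 * R := one_le_mul_of_one_le_of_one_le (Real.one_le_sqrt.mpr one_le_two) hR
  refine ⟨√2 * R, by linarith, ?_⟩
  have hexp : N * Real.exp (-(√2 * R) ^ 2 / 2) = 1 := by
    rw [mul_pow, Real.sq_sqrt zero_le_two, Real.sq_sqrt (by linarith),
      show -(2 * Real.log N) / 2 = -Real.log N by ring, Real.exp_neg, Real.exp_log hN,
      mul_inv_cancel₀ hN.ne']
  have : √2 ≤ 2 := Real.sqrt_le_iff.mpr ⟨zero_le_two, by norm_num⟩
  have : 2 / (√2 * R) ≤ 2 := div_le_self zero_le_two hb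
  rw [mul_assoc, hexp]
  nlinarith

/-- SoS sparse certificates, odd case: there is an absolute constant
`C > 0` such that for all `n ≥ 2`, odd `k ≥ 3` and `1 ≤ t ≤ n`, the Gaussian complexity
of `S_{4k−4,n}` satisfies `E_W sup_{X ∈ S} ⟨X, W⟩ ≤ C·t^{k/2}·√(k·log n)`
where `W` has i.i.d. `N(0,1)` entries. -/
theorem sos_sparse_certificate_odd :
    ∃ C : ℝ, 0 < C ∧ ∀ (n k : ℕ) (t : ℝ), 2 ≤ n → 3 ≤ k → Odd k → 1 ≤ t → t ≤ n →
      ∫ w, (⨆ X ∈ momentSet n k t, ∑ α : Fin k → Fin n, X α * w α)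
          ∂(Measure.pi fun _ : Fin k → Fin n => gaussianReal 0 1)
        ≤ C * t ^ ((k : ℝ) / 2) * Real.sqrt (k * Real.log n) := by
  refine ⟨4, by norm_num, fun n k t hn hk _ ht _ => ?_⟩
  have hlog : 1 ≤ Real.log ((n : ℝ) ^ k) := by
    rw [Real.log_pow]
    have : (3 : ℝ) * 0.6931471803 ≤ k * Real.log n := mul_le_mul (by exact_mod_cast hk)
      (Real.log_two_gt_d9.le.trans (Real.log_le_log two_pos (by exact_mod_cast hn)))
      (by norm_num) (by positivity)
    linarith
  obtain ⟨b, hb, hbound⟩ := exists_pos_add_two_mul_exp_div_le (by positivity) hlog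
  calc _ ≤ √(t ^ k) * (b + 2 * Fintype.card (Fin k → Fin n) * Real.exp (-b ^ 2 / 2) / b) :=
        integral_iSup_le_of_forall_sum_mul_le _ (Real.sqrt_nonneg _) hb fun X hX M w hM hw =>
          sum_mul_le_of_mem_momentSet hX hk (by linarith) hM w hw
    _ ≤ √(t ^ k) * (4 * √(Real.log ((n : ℝ) ^ k))) := by
        gcongr
        simpa using hbound
    _ = 4 * t ^ ((k : ℝ) / 2) * √(k * Real.log n) := by
        rw [Real.log_pow, Real.sqrt_eq_rpow, ← Real.rpow_natCast,
          ← Real.rpow_mul (by linarith), mul_one_div]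
        ring
end
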